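/- arXiv:2602.22275 — 2 statements merged into one kernel-verified Lean document; each statement's English description precedes it below -/
import Mathlib

section
/- Let L > 0 and let C : ℝ → EuclideanSpace ℝ (Fin 3) be four times continuously differentiable (ContDiff ℝ 4) with ‖deriv C s‖ = 1 for every s ∈ [0, L]. Then there exists a constant K > 0 such that for every n ≥ 1, taking the equally spaced arclength samples sᵢ = i·L/n (0 ≤ i ≤ n), one has 0 ≤ L − Σ_{i=0}^{n−1} ‖C(s_{i+1}) − C(s_i)‖ ≤ K·L³/n², i.e. the inscribed polygon length converges to the curve length at rate O(h²) with h = L/n. -/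
/-!
A chord is never longer than its arc, and it is at least as long as its projection onto the unit
tangent at its left end. The tangent `deriv C` is `C¹`, hence `M`-Lipschitz on `[0, L]`; two unit
vectors at distance `≤ Mτ` have inner product `≥ 1 - M²τ²/2`, and integrating this over a
parameter interval of length `h` bounds the chord below by `h - M²h³/6`. The `n` chords of the
polygon thus each fall short of their arcs by at most `M²(L/n)³/6`, a total of `M²L³/(6n²)`.
-/

open RealInnerProductSpace Set Finset NNReal

theorem one_sub_sq_div_two_le_inner {E : Type*} [NormedAddCommGroup E] [InnerProductSpace ℝ E]
    {u v : E} {δ : ℝ} (hu : ‖u‖ = 1) (hv : ‖v‖ = 1) (huv : ‖u - v‖ ≤ δ) :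
    1 - δ ^ 2 / 2 ≤ ⟪u, v⟫ := by
  have hsq : ‖u - v‖ ^ 2 = 2 - 2 * ⟪u, v⟫ := by
    rw [norm_sub_sq_real, hu, hv]; ring
  nlinarith [norm_nonneg (u - v)]

theorem sub_sub_le_norm_sub_of_lipschitzOnWith_unit_deriv
    {E : Type*} [NormedAddCommGroup E] [InnerProductSpace ℝ E]
    {γ γ' : ℝ → E} {a b : ℝ} {K : ℝ≥0} (hab : a ≤ b)
    (hγ : ∀ t ∈ Icc a b, HasDerivWithinAt γ (γ' t) (Icc a b) t)
    (hunit : ∀ t ∈ Icc a b, ‖γ' t‖ = 1) (hlip : LipschitzOnWith K γ' (Icc a b)) :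
    b - a - K ^ 2 * (b - a) ^ 3 / 6 ≤ ‖γ b - γ a‖ := by
  have ha : a ∈ Icc a b := left_mem_Icc.2 hab
  set ψ : ℝ → ℝ := fun t ↦ ⟪γ t - γ a, γ' a⟫ - (t - a - K ^ 2 * (t - a) ^ 3 / 6)
  have hψ' : ∀ t ∈ Icc a b, HasDerivWithinAt ψ
      (⟪γ' t, γ' a⟫ - (1 - K ^ 2 * (t - a) ^ 2 / 2)) (Icc a b) t := by
    intro t ht
    have hlin : HasDerivAt (fun t : ℝ ↦ t - a) 1 t := (hasDerivAt_id' t).sub_const a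
    have hpoly : HasDerivAt (fun t : ℝ ↦ t - a - K ^ 2 * (t - a) ^ 3 / 6)
        (1 - K ^ 2 * (t - a) ^ 2 / 2) t := by
      refine (hlin.fun_sub (((hlin.fun_pow 3).const_mul ((K : ℝ) ^ 2)).div_const 6)).congr_deriv ?_
      push_cast; ring
    refine (((hγ t ht).sub_const (γ a)).inner ℝ (hasDerivWithinAt_const t _ (γ' a))
      |>.fun_sub hpoly.hasDerivWithinAt).congr_deriv ?_
    simp
  have hmono : MonotoneOn ψ (Icc a b) := by
    refine monotoneOn_of_hasDerivWithinAt_nonneg (convex_Icc a b)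
      (fun t ht ↦ (hψ' t ht).continuousWithinAt)
      (fun t ht ↦ (hψ' t (interior_subset ht)).mono interior_subset) fun t ht ↦ ?_
    have ht := interior_subset ht
    have hdist : ‖γ' t - γ' a‖ ≤ K * (t - a) := by
      simpa [← dist_eq_norm, Real.dist_eq, abs_of_nonneg (sub_nonneg.2 ht.1)]
        using hlip.dist_le_mul t ht a ha
    have := one_sub_sq_div_two_le_inner (hunit t ht) (hunit a ha) hdist
    rw [mul_pow] at this
    linarith
  have hψb : ψ a ≤ ψ b := hmono ha (right_mem_Icc.2 hab) hab
  have hinner : ⟪γ b - γ a, γ' a⟫ ≤ ‖γ b - γ a‖ := by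
    simpa [hunit a ha] using real_inner_le_norm (γ b - γ a) (γ' a)
  simp only [ψ, sub_self, inner_zero_left] at hψb
  linarith

theorem sub_sum_norm_sub_mem_Icc_of_chord_bounds {E : Type*} [SeminormedAddCommGroup E]
    {f : ℝ → E} {L c : ℝ} (hL : 0 ≤ L) {n : ℕ} (hn : 0 < n)
    (hchord : ∀ a ∈ Icc 0 L, ∀ b ∈ Icc 0 L, a ≤ b →
      b - a - c * (b - a) ^ 3 ≤ ‖f b - f a‖ ∧ ‖f b - f a‖ ≤ b - a) :
    0 ≤ L - ∑ i ∈ range n, ‖f (((i : ℝ) + 1) * L / n) - f ((i : ℝ) * L / n)‖ ∧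
      L - ∑ i ∈ range n, ‖f (((i : ℝ) + 1) * L / n) - f ((i : ℝ) * L / n)‖ ≤
        c * L ^ 3 / n ^ 2 := by
  have hn₀ : (0 : ℝ) < n := Nat.cast_pos.2 hn
  have hnode : ∀ i : ℕ, i ≤ n → (i : ℝ) * L / n ∈ Icc 0 L := fun i hi ↦
    ⟨by positivity, div_le_of_le_mul₀ hn₀.le hL
      (by rw [mul_comm]; exact mul_le_mul_of_nonneg_left (by exact_mod_cast hi) hL)⟩
  have hdefect : ∀ i ∈ range n,
      0 ≤ L / n - ‖f (((i : ℝ) + 1) * L / n) - f ((i : ℝ) * L / n)‖ ∧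
        L / n - ‖f (((i : ℝ) + 1) * L / n) - f ((i : ℝ) * L / n)‖ ≤ c * (L / n) ^ 3 := by
    intro i hi
    have hi := mem_range.1 hi
    have hstep : ((i : ℝ) + 1) * L / n - (i : ℝ) * L / n = L / n := by ring
    have hnext : ((i : ℝ) + 1) * L / n ∈ Icc 0 L := by exact_mod_cast hnode (i + 1) hi
    obtain ⟨hlow, hup⟩ := hchord _ (hnode i hi.le) _ hnext
      (by rw [← sub_nonneg, hstep]; positivity)
    rw [hstep] at hlow hup
    constructor <;> linarith
  have hsplit : L - ∑ i ∈ range n, ‖f (((i : ℝ) + 1) * L / n) - f ((i : ℝ) * L / n)‖ =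
      ∑ i ∈ range n, (L / n - ‖f (((i : ℝ) + 1) * L / n) - f ((i : ℝ) * L / n)‖) := by
    rw [sum_sub_distrib, sum_const, card_range, nsmul_eq_mul, mul_div_cancel₀ _ hn₀.ne']
  rw [hsplit]
  refine ⟨sum_nonneg fun i hi ↦ (hdefect i hi).1, ?_⟩
  calc _ ≤ ∑ _i ∈ range n, c * (L / n) ^ 3 := sum_le_sum fun i hi ↦ (hdefect i hi).2
    _ = c * L ^ 3 / n ^ 2 := by
      rw [sum_const, card_range, nsmul_eq_mul]
      field_simp

/-- The inscribed polygon through equally spaced arclength samples `sᵢ = i·L/n`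
underestimates the length `L` of an arclength-parametrized `C⁴` curve by at most
`K·L³/n²`. -/
theorem inscribed_polygon_length_second_order
    (L : ℝ) (hL : 0 < L) (C : ℝ → EuclideanSpace ℝ (Fin 3))
    (hC : ContDiff ℝ 4 C)
    (harc : ∀ s ∈ Set.Icc (0 : ℝ) L, ‖deriv C s‖ = 1) :
    ∃ K > (0 : ℝ), ∀ n : ℕ, 1 ≤ n →
      0 ≤ L - ∑ i ∈ Finset.range n,
          ‖C (((i : ℝ) + 1) * L / n) - C ((i : ℝ) * L / n)‖ ∧
      L - ∑ i ∈ Finset.range n,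
          ‖C (((i : ℝ) + 1) * L / n) - C ((i : ℝ) * L / n)‖ ≤ K * L ^ 3 / n ^ 2 := by
  have hC₂ : ContDiff ℝ (1 + 1) C := hC.of_le (by norm_num)
  obtain ⟨M, hM⟩ : ∃ M, LipschitzOnWith M (deriv C) (Icc 0 L) :=
    hC₂.deriv'.locallyLipschitz.locallyLipschitzOn.exists_lipschitzOnWith_of_compact isCompact_Icc
  have hderiv : ∀ t, HasDerivAt C (deriv C t) t :=
    fun t ↦ (hC₂.differentiable (by norm_num) t).hasDerivAt
  have hchord : ∀ a ∈ Icc 0 L, ∀ b ∈ Icc 0 L, a ≤ b →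
      b - a - M ^ 2 / 6 * (b - a) ^ 3 ≤ ‖C b - C a‖ ∧ ‖C b - C a‖ ≤ b - a := by
    intro a ha b hb hab
    have hsub : Icc a b ⊆ Icc 0 L := Icc_subset_Icc ha.1 hb.2
    have hunit : ∀ t ∈ Icc a b, ‖deriv C t‖ = 1 := fun t ht ↦ harc t (hsub ht)
    have hγ : ∀ t ∈ Icc a b, HasDerivWithinAt C (deriv C t) (Icc a b) t :=
      fun t _ ↦ (hderiv t).hasDerivWithinAt
    constructor
    · have := sub_sub_le_norm_sub_of_lipschitzOnWith_unit_deriv hab hγ hunit (hM.mono hsub)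
      linarith
    · simpa using norm_image_sub_le_of_norm_deriv_le_segment' hγ
        (fun t ht ↦ (hunit t (Ico_subset_Icc_self ht)).le) b (right_mem_Icc.2 hab)
  refine ⟨M ^ 2 / 6 + 1, by positivity, fun n hn ↦ ?_⟩
  obtain ⟨hlow, hup⟩ := sub_sum_norm_sub_mem_Icc_of_chord_bounds hL.le hn hchord
  exact ⟨hlow, hup.trans (by gcongr; linarith)⟩
end

section
/- Let h > 0 and let f : ℝ → ℝ be four times continuously differentiable (ContDiff ℝ 4) on an open set containing [−h/2, h/2], and suppose ‖f⁗(t)‖ ≤ M for all t ∈ [−h/2, h/2], where f⁗ is the fourth derivative. Then | ∫_{−h/2}^{h/2} f(t) dt − f(0)·h − f''(0)·h³/24 | ≤ M·h⁵/1920. In particular, the integral of f over the symmetric interval equals f(0)h + f''(0)h³/24 + O(h⁵). -/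
/-!
Expand `f` around `0` to third order.  By Taylor's theorem with the Lagrange remainder the
cubic Taylor polynomial differs from `f t` by at most `M t⁴ / 24`; its odd terms integrate to
zero over the symmetric interval, and the remainder integrates to at most
`M / 24 · ∫_{−h/2}^{h/2} t⁴ dt = M h⁵ / 1920`.
-/

open Set Finset Nat intervalIntegral

theorem taylorWithinEval_eq_sum_iteratedDeriv {E : Type*} [NormedAddCommGroup E]
    [NormedSpace ℝ E] {f : ℝ → E} {s : Set ℝ} {x₀ x : ℝ} {n : ℕ} (hs : UniqueDiffOn ℝ s)
    (hx₀ : x₀ ∈ s) (hf : ContDiffAt ℝ n f x₀) :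
    taylorWithinEval f n s x₀ x
      = ∑ k ∈ range (n + 1), ((k ! : ℝ)⁻¹ * (x - x₀) ^ k) • iteratedDeriv k f x₀ := by
  rw [taylor_within_apply]
  refine sum_congr rfl fun k hk => ?_
  have hkn : (k : WithTop ℕ∞) ≤ n := by exact_mod_cast Nat.lt_succ_iff.mp (mem_range.mp hk)
  rw [iteratedDerivWithin_eq_iteratedDeriv hs (hf.of_le hkn) hx₀]

theorem abs_sub_taylor_sum_le {f : ℝ → ℝ} {U : Set ℝ} {n : ℕ} {x₀ x M : ℝ} (hU : IsOpen U)
    (hf : ContDiffOn ℝ (n + 1) f U) (hsub : uIcc x₀ x ⊆ U)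
    (hM : ∀ y ∈ uIcc x₀ x, |iteratedDeriv (n + 1) f y| ≤ M) :
    |f x - ∑ k ∈ range (n + 1), iteratedDeriv k f x₀ / k ! * (x - x₀) ^ k|
      ≤ M * |x - x₀| ^ (n + 1) / (n + 1)! := by
  rcases eq_or_ne x₀ x with rfl | hx
  · simp [sum_range_succ']
  have hx₀ : x₀ ∈ uIcc x₀ x := left_mem_uIcc
  have hsum : ∑ k ∈ range (n + 1), iteratedDeriv k f x₀ / k ! * (x - x₀) ^ k
      = taylorWithinEval f n (uIcc x₀ x) x₀ x := by
    rw [taylorWithinEval_eq_sum_iteratedDeriv (uniqueDiffOn_uIcc hx) hx₀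
      ((hf.contDiffAt (hU.mem_nhds (hsub hx₀))).of_le (by exact_mod_cast n.le_succ))]
    simp only [smul_eq_mul]
    exact sum_congr rfl fun k _ => by ring
  obtain ⟨x', hx', hL⟩ := taylor_mean_remainder_lagrange_iteratedDeriv hx (hf.mono hsub)
  rw [hsum, hL, abs_div, abs_mul, abs_pow, Nat.abs_cast]
  gcongr
  exact hM x' (uIoo_subset_uIcc_self hx')

theorem abs_sub_cubic_taylor_le {f : ℝ → ℝ} {U : Set ℝ} {x M : ℝ} (hU : IsOpen U)
    (hf : ContDiffOn ℝ 4 f U) (hsub : uIcc 0 x ⊆ U)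
    (hM : ∀ y ∈ uIcc 0 x, |iteratedDeriv 4 f y| ≤ M) :
    |f x - ∑ k ∈ range 4, iteratedDeriv k f 0 / k ! * x ^ k| ≤ M / 24 * x ^ 4 := by
  have hT := abs_sub_taylor_sum_le (n := 3) hU hf hsub hM
  simp only [sub_zero] at hT
  calc _ ≤ M * |x| ^ (3 + 1) / (3 + 1)! := hT
    _ = M / 24 * x ^ 4 := by
      rw [(by decide : Even (3 + 1)).pow_abs]
      simp only [factorial]
      push_cast
      ring

theorem integral_cubic_symm (a : ℝ) (c : ℕ → ℝ) :
    ∫ t in -a..a, ∑ k ∈ range 4, c k * t ^ k = 2 * a * c 0 + 2 * a ^ 3 / 3 * c 2 := by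
  rw [integral_finsetSum fun k _ =>
    (by fun_prop : Continuous fun t : ℝ => c k * t ^ k).intervalIntegrable _ _]
  simp only [integral_const_mul, integral_pow, sum_range_succ, sum_range_zero]
  push_cast
  ring

/-- Midpoint-type quadrature over a symmetric interval:
`∫_{−h/2}^{h/2} f = f(0)·h + f''(0)·h³/24 + O(h⁵)`, with explicit error bound
`M·h⁵/1920` when the fourth derivative is bounded by `M` on the interval. -/
theorem symmetric_integral_expansion
    (h : ℝ) (hh : 0 < h) (f : ℝ → ℝ) (U : Set ℝ) (hU : IsOpen U)
    (hsub : Set.Icc (-(h / 2)) (h / 2) ⊆ U) (hf : ContDiffOn ℝ 4 f U)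
    (M : ℝ) (hM : ∀ t ∈ Set.Icc (-(h / 2)) (h / 2), ‖iteratedDeriv 4 f t‖ ≤ M) :
    |(∫ t in (-(h / 2))..(h / 2), f t) - f 0 * h - iteratedDeriv 2 f 0 * h ^ 3 / 24|
      ≤ M * h ^ 5 / 1920 := by
  set P : ℝ → ℝ := fun t => ∑ k ∈ range 4, iteratedDeriv k f 0 / k ! * t ^ k
  have hab : -(h / 2) ≤ h / 2 := by linarith
  have h0 : (0 : ℝ) ∈ Icc (-(h / 2)) (h / 2) := ⟨by linarith, by linarith⟩
  have hremainder : ∀ t ∈ Icc (-(h / 2)) (h / 2), ‖f t - P t‖ ≤ M / 24 * t ^ 4 := fun t ht =>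
    have hI : uIcc 0 t ⊆ Icc (-(h / 2)) (h / 2) := uIcc_subset_Icc h0 ht
    abs_sub_cubic_taylor_le hU hf (hI.trans hsub) fun y hy => hM y (hI hy)
  have hfi : IntervalIntegrable f MeasureTheory.volume (-(h / 2)) (h / 2) :=
    ((hf.continuousOn).mono ((uIcc_of_le hab).trans_subset hsub)).intervalIntegrable
  have hPi : IntervalIntegrable P MeasureTheory.volume (-(h / 2)) (h / 2) :=
    (by fun_prop : Continuous P).intervalIntegrable _ _
  have hP : ∫ t in (-(h / 2))..(h / 2), P t = f 0 * h + iteratedDeriv 2 f 0 * h ^ 3 / 24 := by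
    rw [integral_cubic_symm]
    simp only [iteratedDeriv_zero, factorial, cast_one]
    ring
  calc |(∫ t in (-(h / 2))..(h / 2), f t) - f 0 * h - iteratedDeriv 2 f 0 * h ^ 3 / 24|
      = ‖∫ t in (-(h / 2))..(h / 2), (f t - P t)‖ := by
        rw [integral_sub hfi hPi, hP, Real.norm_eq_abs, sub_sub]
    _ ≤ ∫ t in (-(h / 2))..(h / 2), M / 24 * t ^ 4 :=
        norm_integral_le_of_norm_le hab
          (MeasureTheory.ae_of_all _ fun t ht => hremainder t (Ioc_subset_Icc_self ht))
          ((continuous_const.mul (continuous_pow 4)).intervalIntegrable _ _)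
    _ = M * h ^ 5 / 1920 := by
        rw [integral_const_mul, integral_pow]
        ring
end
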